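/- arXiv:quant-ph/0408125 — 3 statements merged into one kernel-verified Lean document; each statement's English description precedes it below -/
import Mathlib

section
/- Let ρ be a density matrix on ℂ^s ⊗ ℂ^f ⊗ ℂ^g. Let (A_i)_{i∈I} be a projective measurement on ℂ^s, (X_i)_{i∈I} a projective measurement on ℂ^f with Re Tr((A_i ⊗ X_j ⊗ 1) ρ) = 0 whenever i ≠ j, and let (Y_j)_{j∈J} be a projective measurement on ℂ^g together with a map f : J → I such that Re Tr((A_i ⊗ 1 ⊗ Y_j) ρ) = 0 whenever i ≠ f(j). Let ρ^{SF} be the partial trace of ρ over the third factor. Then for every i ∈ I, ρ^{SF} commutes with both A_i ⊗ 1 and 1 ⊗ X_i: (A_i ⊗ 1) ρ^{SF} = ρ^{SF} (A_i ⊗ 1) and (1 ⊗ X_i) ρ^{SF} = ρ^{SF} (1 ⊗ X_i). -/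
open Matrix Kronecker BigOperators ComplexOrder

noncomputable section

/-- A density matrix: positive semidefinite with trace 1. -/
def IsDensityMatrix {n : Type*} [Fintype n] (ρ : Matrix n n ℂ) : Prop :=
  ρ.PosSemidef ∧ ρ.trace = 1

/-- A projective measurement: a finite family of Hermitian, mutually orthogonal
idempotents summing to the identity. -/
def IsProjMeasurement {ι n : Type*} [Fintype ι] [DecidableEq ι] [Fintype n] [DecidableEq n]
    (P : ι → Matrix n n ℂ) : Prop :=
  (∀ k, (P k).IsHermitian) ∧
  (∀ k l, P k * P l = if k = l then P k else 0) ∧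
  (∑ k, P k = 1)

/-- Partial trace over the third tensor factor. -/
def ptrace3 {a b c : ℕ} (ρ : Matrix ((Fin a × Fin b) × Fin c) ((Fin a × Fin b) × Fin c) ℂ) :
    Matrix (Fin a × Fin b) (Fin a × Fin b) ℂ :=
  Matrix.of fun pq pq' => ∑ k, ρ (pq, k) (pq', k)

/-! ### Auxiliary lemmas -/

lemma aux_self_mul_ct_re_zero {m n : Type*} [Fintype m] [Fintype n] {M : Matrix m n ℂ}
    (h : ((M * Mᴴ).trace).re = 0) : M = 0 := by
  have key : ((M * Mᴴ).trace).re = ∑ i, ∑ j, Complex.normSq (M i j) := by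
    simp [Matrix.trace, Matrix.mul_apply, Matrix.diag, Complex.re_sum,
      Matrix.conjTranspose_apply, Complex.mul_conj, RCLike.star_def]
  rw [key] at h
  ext i j
  have h1 : ∀ i ∈ Finset.univ, (0:ℝ) ≤ ∑ j, Complex.normSq (M i j) :=
    fun i _ => Finset.sum_nonneg fun j _ => Complex.normSq_nonneg _
  have h2 := (Finset.sum_eq_zero_iff_of_nonneg h1).mp h i (Finset.mem_univ i)
  have h3 := (Finset.sum_eq_zero_iff_of_nonneg
    (fun j _ => Complex.normSq_nonneg (M i j))).mp h2 j (Finset.mem_univ j)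
  simpa using Complex.normSq_eq_zero.mp h3

lemma aux_proj_mul_eq_zero {n : Type*} [Fintype n] [DecidableEq n] {P ρ : Matrix n n ℂ}
    (hP : Pᴴ = P) (hPP : P * P = P) (hρ : ρ.PosSemidef)
    (h : ((P * ρ).trace).re = 0) : P * ρ = 0 := by
  obtain ⟨S, hSH, hSS⟩ : ∃ S : Matrix n n ℂ, Sᴴ = S ∧ S * S = ρ := by
    open scoped MatrixOrder in
    obtain ⟨X, hX, -, hXX⟩ := CFC.exists_sqrt_of_isSelfAdjoint_of_quasispectrumRestricts
      hρ.isHermitian (QuasispectrumRestricts.nnreal_of_nonneg hρ.nonneg)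
    exact ⟨X, hX.star_eq, hXX⟩
  have hMM : (P * S) * (P * S)ᴴ = P * ρ * P := by
    rw [conjTranspose_mul, hSH, hP, Matrix.mul_assoc, ← Matrix.mul_assoc S S P, hSS,
      ← Matrix.mul_assoc]
  have htr : ((P * S) * (P * S)ᴴ).trace = (P * ρ).trace := by
    rw [hMM, Matrix.trace_mul_cycle, hPP]
  have hM0 : P * S = 0 := aux_self_mul_ct_re_zero (by rw [htr]; exact h)
  calc P * ρ = (P * S) * S := by rw [Matrix.mul_assoc, hSS]
    _ = 0 := by rw [hM0, Matrix.zero_mul]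

lemma aux_kron_ct {l m n p : Type*} [Fintype l] [Fintype m] [Fintype n] [Fintype p]
    (A : Matrix l m ℂ) (B : Matrix n p ℂ) : (A ⊗ₖ B)ᴴ = Aᴴ ⊗ₖ Bᴴ := by
  ext ⟨i, j⟩ ⟨k, l⟩
  simp [Matrix.conjTranspose_apply, Matrix.kroneckerMap_apply]

lemma aux_kron_sum_right {ι l m n p : Type*} [Fintype l] [Fintype m] [Fintype n] [Fintype p]
    (s : Finset ι) (A : Matrix l m ℂ) (B : ι → Matrix n p ℂ) :
    A ⊗ₖ (∑ j ∈ s, B j) = ∑ j ∈ s, A ⊗ₖ B j := by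
  ext ⟨i, j⟩ ⟨k, l⟩
  rw [Matrix.sum_apply, Matrix.kroneckerMap_apply, Matrix.sum_apply, Finset.mul_sum]
  exact Finset.sum_congr rfl fun x _ => rfl

lemma aux_kron_sum_left {ι l m n p : Type*} [Fintype l] [Fintype m] [Fintype n] [Fintype p]
    (s : Finset ι) (A : ι → Matrix l m ℂ) (B : Matrix n p ℂ) :
    (∑ j ∈ s, A j) ⊗ₖ B = ∑ j ∈ s, A j ⊗ₖ B := by
  ext ⟨i, j⟩ ⟨k, l⟩
  rw [Matrix.sum_apply, Matrix.kroneckerMap_apply, Matrix.sum_apply, Finset.sum_mul]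
  exact Finset.sum_congr rfl fun x _ => rfl

lemma aux_ptrace_left {a b c : ℕ} (M : Matrix (Fin a × Fin b) (Fin a × Fin b) ℂ)
    (ρ : Matrix ((Fin a × Fin b) × Fin c) ((Fin a × Fin b) × Fin c) ℂ) :
    ptrace3 ((M ⊗ₖ (1 : Matrix (Fin c) (Fin c) ℂ)) * ρ) = M * ptrace3 ρ := by
  ext p p'
  simp only [ptrace3, Matrix.of_apply, Matrix.mul_apply, Matrix.kroneckerMap_apply,
    Matrix.one_apply, Fintype.sum_prod_type, mul_ite, ite_mul, mul_one, one_mul,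
    mul_zero, zero_mul, Finset.sum_ite_eq, Finset.sum_ite_eq', Finset.mem_univ, if_true,
    Finset.mul_sum]
  rw [Finset.sum_comm]
  exact Finset.sum_congr rfl fun x _ => Finset.sum_comm

lemma aux_ptrace_right {a b c : ℕ} (M : Matrix (Fin a × Fin b) (Fin a × Fin b) ℂ)
    (ρ : Matrix ((Fin a × Fin b) × Fin c) ((Fin a × Fin b) × Fin c) ℂ) :
    ptrace3 (ρ * (M ⊗ₖ (1 : Matrix (Fin c) (Fin c) ℂ))) = ptrace3 ρ * M := by
  ext p p'
  simp only [ptrace3, Matrix.of_apply, Matrix.mul_apply, Matrix.kroneckerMap_apply,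
    Matrix.one_apply, Fintype.sum_prod_type, mul_ite, ite_mul, mul_one, one_mul,
    mul_zero, zero_mul, Finset.sum_ite_eq, Finset.sum_ite_eq', Finset.mem_univ, if_true,
    Finset.sum_mul]
  rw [Finset.sum_comm]
  exact Finset.sum_congr rfl fun x _ => Finset.sum_comm

lemma aux_ptrace_swap {a b c : ℕ} (N : Matrix (Fin c) (Fin c) ℂ)
    (ρ : Matrix ((Fin a × Fin b) × Fin c) ((Fin a × Fin b) × Fin c) ℂ) :
    ptrace3 (((1 : Matrix (Fin a × Fin b) (Fin a × Fin b) ℂ) ⊗ₖ N) * ρ)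
      = ptrace3 (ρ * ((1 : Matrix (Fin a × Fin b) (Fin a × Fin b) ℂ) ⊗ₖ N)) := by
  ext ⟨p1, p2⟩ ⟨q1, q2⟩
  simp only [ptrace3, Matrix.of_apply, Matrix.mul_apply, Matrix.kroneckerMap_apply,
    Matrix.one_apply, Fintype.sum_prod_type, Prod.mk.injEq, ite_and, mul_ite, ite_mul,
    mul_one, one_mul, mul_zero, zero_mul, Finset.sum_ite_eq, Finset.sum_ite_eq',
    Finset.mem_univ, if_true, Finset.sum_ite_irrel, Finset.sum_const_zero]
  rw [Finset.sum_comm]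
  exact Finset.sum_congr rfl fun k _ => Finset.sum_congr rfl fun l _ => mul_comm _ _

/-- Corollary 2: when `A` is redundantly imprinted (a record `X` in the fragment and a
record `Y` in the rest of the environment), the reduced state `ρ^{SF}` commutes with
both `Aᵢ ⊗ 1` and `1 ⊗ Xᵢ`: the correlations between `A` and `X` are classical. -/
theorem stmt_3 {s fdim gdim : ℕ} {I J : Type*}
    [Fintype I] [DecidableEq I] [Fintype J] [DecidableEq J]
    (ρ : Matrix ((Fin s × Fin fdim) × Fin gdim) ((Fin s × Fin fdim) × Fin gdim) ℂ)
    (hρ : IsDensityMatrix ρ)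
    (A : I → Matrix (Fin s) (Fin s) ℂ) (hA : IsProjMeasurement A)
    (X : I → Matrix (Fin fdim) (Fin fdim) ℂ) (hX : IsProjMeasurement X)
    (Y : J → Matrix (Fin gdim) (Fin gdim) ℂ) (hY : IsProjMeasurement Y)
    (f : J → I)
    (hAX : ∀ i j, i ≠ j →
      ((((A i ⊗ₖ X j) ⊗ₖ (1 : Matrix (Fin gdim) (Fin gdim) ℂ)) * ρ).trace).re = 0)
    (hAY : ∀ i j, i ≠ f j →
      ((((A i ⊗ₖ (1 : Matrix (Fin fdim) (Fin fdim) ℂ)) ⊗ₖ Y j) * ρ).trace).re = 0) :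
    ∀ i,
      (A i ⊗ₖ (1 : Matrix (Fin fdim) (Fin fdim) ℂ)) * ptrace3 ρ
        = ptrace3 ρ * (A i ⊗ₖ (1 : Matrix (Fin fdim) (Fin fdim) ℂ)) ∧
      ((1 : Matrix (Fin s) (Fin s) ℂ) ⊗ₖ X i) * ptrace3 ρ
        = ptrace3 ρ * ((1 : Matrix (Fin s) (Fin s) ℂ) ⊗ₖ X i) := by
  obtain ⟨hρpsd, -⟩ := hρ
  have hρH : ρᴴ = ρ := hρpsd.1
  obtain ⟨hAH, hAO, hAS⟩ := hA
  obtain ⟨hXH, hXO, hXS⟩ := hX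
  obtain ⟨hYH, hYO, hYS⟩ := hY
  have ZAX : ∀ i j, i ≠ j →
      ((A i ⊗ₖ X j) ⊗ₖ (1 : Matrix (Fin gdim) (Fin gdim) ℂ)) * ρ = 0 := by
    intro i j hij
    refine aux_proj_mul_eq_zero ?_ ?_ hρpsd (hAX i j hij)
    · rw [aux_kron_ct, aux_kron_ct, (hAH i).eq, (hXH j).eq, Matrix.conjTranspose_one]
    · rw [← Matrix.mul_kronecker_mul, ← Matrix.mul_kronecker_mul, hAO i i, hXO j j, one_mul]
      simp
  have ZAY : ∀ i j, i ≠ f j →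
      ((A i ⊗ₖ (1 : Matrix (Fin fdim) (Fin fdim) ℂ)) ⊗ₖ Y j) * ρ = 0 := by
    intro i j hij
    refine aux_proj_mul_eq_zero ?_ ?_ hρpsd (hAY i j hij)
    · rw [aux_kron_ct, aux_kron_ct, (hAH i).eq, (hYH j).eq, Matrix.conjTranspose_one]
    · rw [← Matrix.mul_kronecker_mul, ← Matrix.mul_kronecker_mul, hAO i i, hYO j j, one_mul]
      simp
  have transfer : ∀ Q R : Matrix ((Fin s × Fin fdim) × Fin gdim)
      ((Fin s × Fin fdim) × Fin gdim) ℂ,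
      Qᴴ = Q → Rᴴ = R → Q * ρ = R * ρ → ρ * Q = ρ * R := by
    intro Q R hQ hR h
    calc ρ * Q = (Q * ρ)ᴴ := by rw [Matrix.conjTranspose_mul, hρH, hQ]
      _ = (R * ρ)ᴴ := by rw [h]
      _ = ρ * R := by rw [Matrix.conjTranspose_mul, hρH, hR]
  intro i
  have E1 : ((A i ⊗ₖ (1 : Matrix (Fin fdim) (Fin fdim) ℂ))
        ⊗ₖ (1 : Matrix (Fin gdim) (Fin gdim) ℂ)) * ρ
      = ((A i ⊗ₖ X i) ⊗ₖ (1 : Matrix (Fin gdim) (Fin gdim) ℂ)) * ρ := by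
    have h1 : (A i ⊗ₖ (1 : Matrix (Fin fdim) (Fin fdim) ℂ))
          ⊗ₖ (1 : Matrix (Fin gdim) (Fin gdim) ℂ)
        = ∑ j, (A i ⊗ₖ X j) ⊗ₖ (1 : Matrix (Fin gdim) (Fin gdim) ℂ) := by
      rw [← hXS, aux_kron_sum_right, aux_kron_sum_left]
    rw [h1, Finset.sum_mul]
    exact Finset.sum_eq_single i (fun j _ hji => ZAX i j (Ne.symm hji)) (by simp)
  have E2 : (((1 : Matrix (Fin s) (Fin s) ℂ) ⊗ₖ X i)
        ⊗ₖ (1 : Matrix (Fin gdim) (Fin gdim) ℂ)) * ρ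
      = ((A i ⊗ₖ X i) ⊗ₖ (1 : Matrix (Fin gdim) (Fin gdim) ℂ)) * ρ := by
    have h1 : ((1 : Matrix (Fin s) (Fin s) ℂ) ⊗ₖ X i)
          ⊗ₖ (1 : Matrix (Fin gdim) (Fin gdim) ℂ)
        = ∑ k, (A k ⊗ₖ X i) ⊗ₖ (1 : Matrix (Fin gdim) (Fin gdim) ℂ) := by
      rw [← hAS, aux_kron_sum_left, aux_kron_sum_left]
    rw [h1, Finset.sum_mul]
    exact Finset.sum_eq_single i (fun k _ hki => ZAX k i hki) (by simp)
  have E0 : ∀ j, (((1 : Matrix (Fin s) (Fin s) ℂ)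
        ⊗ₖ (1 : Matrix (Fin fdim) (Fin fdim) ℂ)) ⊗ₖ Y j) * ρ
      = ((A (f j) ⊗ₖ (1 : Matrix (Fin fdim) (Fin fdim) ℂ)) ⊗ₖ Y j) * ρ := by
    intro j
    have h1 : ((1 : Matrix (Fin s) (Fin s) ℂ)
          ⊗ₖ (1 : Matrix (Fin fdim) (Fin fdim) ℂ)) ⊗ₖ Y j
        = ∑ k, (A k ⊗ₖ (1 : Matrix (Fin fdim) (Fin fdim) ℂ)) ⊗ₖ Y j := by
      rw [← hAS, aux_kron_sum_left, aux_kron_sum_left]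
    rw [h1, Finset.sum_mul]
    exact Finset.sum_eq_single (f j) (fun k _ hk => ZAY k j hk) (by simp)
  have E3 : ((A i ⊗ₖ (1 : Matrix (Fin fdim) (Fin fdim) ℂ))
        ⊗ₖ (1 : Matrix (Fin gdim) (Fin gdim) ℂ)) * ρ
      = (((1 : Matrix (Fin s) (Fin s) ℂ) ⊗ₖ (1 : Matrix (Fin fdim) (Fin fdim) ℂ))
        ⊗ₖ (∑ j ∈ Finset.univ.filter (fun j => f j = i), Y j)) * ρ := by
    have hlhs : ((A i ⊗ₖ (1 : Matrix (Fin fdim) (Fin fdim) ℂ))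
          ⊗ₖ (1 : Matrix (Fin gdim) (Fin gdim) ℂ)) * ρ
        = ∑ j ∈ Finset.univ.filter (fun j => f j = i),
            ((A i ⊗ₖ (1 : Matrix (Fin fdim) (Fin fdim) ℂ)) ⊗ₖ Y j) * ρ := by
      have h1 : (A i ⊗ₖ (1 : Matrix (Fin fdim) (Fin fdim) ℂ))
            ⊗ₖ (1 : Matrix (Fin gdim) (Fin gdim) ℂ)
          = ∑ j, (A i ⊗ₖ (1 : Matrix (Fin fdim) (Fin fdim) ℂ)) ⊗ₖ Y j := by
        rw [← hYS, aux_kron_sum_right]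
      rw [h1, Finset.sum_mul]
      symm
      refine Finset.sum_subset (Finset.filter_subset _ _) ?_
      intro j _ hj
      have hij : i ≠ f j := by
        simp only [Finset.mem_filter, Finset.mem_univ, true_and] at hj
        exact fun h => hj h.symm
      exact ZAY i j hij
    have hrhs : (((1 : Matrix (Fin s) (Fin s) ℂ)
          ⊗ₖ (1 : Matrix (Fin fdim) (Fin fdim) ℂ))
          ⊗ₖ (∑ j ∈ Finset.univ.filter (fun j => f j = i), Y j)) * ρ
        = ∑ j ∈ Finset.univ.filter (fun j => f j = i),
            (((1 : Matrix (Fin s) (Fin s) ℂ)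
              ⊗ₖ (1 : Matrix (Fin fdim) (Fin fdim) ℂ)) ⊗ₖ Y j) * ρ := by
      rw [aux_kron_sum_right, Finset.sum_mul]
    rw [hlhs, hrhs]
    refine Finset.sum_congr rfl fun j hj => ?_
    have hfj : f j = i := by simpa using hj
    rw [E0 j, hfj]
  have HA1 : ((A i ⊗ₖ (1 : Matrix (Fin fdim) (Fin fdim) ℂ))
        ⊗ₖ (1 : Matrix (Fin gdim) (Fin gdim) ℂ))ᴴ
      = (A i ⊗ₖ (1 : Matrix (Fin fdim) (Fin fdim) ℂ))
        ⊗ₖ (1 : Matrix (Fin gdim) (Fin gdim) ℂ) := by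
    rw [aux_kron_ct, aux_kron_ct, (hAH i).eq, Matrix.conjTranspose_one,
      Matrix.conjTranspose_one]
  have HAX1 : ((A i ⊗ₖ X i) ⊗ₖ (1 : Matrix (Fin gdim) (Fin gdim) ℂ))ᴴ
      = (A i ⊗ₖ X i) ⊗ₖ (1 : Matrix (Fin gdim) (Fin gdim) ℂ) := by
    rw [aux_kron_ct, aux_kron_ct, (hAH i).eq, (hXH i).eq, Matrix.conjTranspose_one]
  have H1X : (((1 : Matrix (Fin s) (Fin s) ℂ) ⊗ₖ X i)
        ⊗ₖ (1 : Matrix (Fin gdim) (Fin gdim) ℂ))ᴴ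
      = ((1 : Matrix (Fin s) (Fin s) ℂ) ⊗ₖ X i)
        ⊗ₖ (1 : Matrix (Fin gdim) (Fin gdim) ℂ) := by
    rw [aux_kron_ct, aux_kron_ct, (hXH i).eq, Matrix.conjTranspose_one,
      Matrix.conjTranspose_one]
  have HMsum : (∑ j ∈ Finset.univ.filter (fun j => f j = i), Y j)ᴴ
      = ∑ j ∈ Finset.univ.filter (fun j => f j = i), Y j := by
    rw [Matrix.conjTranspose_sum]
    exact Finset.sum_congr rfl fun j _ => (hYH j).eq
  have HM : (((1 : Matrix (Fin s) (Fin s) ℂ) ⊗ₖ (1 : Matrix (Fin fdim) (Fin fdim) ℂ))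
        ⊗ₖ (∑ j ∈ Finset.univ.filter (fun j => f j = i), Y j))ᴴ
      = ((1 : Matrix (Fin s) (Fin s) ℂ) ⊗ₖ (1 : Matrix (Fin fdim) (Fin fdim) ℂ))
        ⊗ₖ (∑ j ∈ Finset.univ.filter (fun j => f j = i), Y j) := by
    rw [aux_kron_ct, aux_kron_ct, Matrix.conjTranspose_one, Matrix.conjTranspose_one, HMsum]
  have E3r := transfer _ _ HA1 HM E3
  have E1r := transfer _ _ HA1 HAX1 E1
  have E2r := transfer _ _ H1X HAX1 E2
  have key : ptrace3 (((A i ⊗ₖ (1 : Matrix (Fin fdim) (Fin fdim) ℂ))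
        ⊗ₖ (1 : Matrix (Fin gdim) (Fin gdim) ℂ)) * ρ)
      = ptrace3 (ρ * ((A i ⊗ₖ (1 : Matrix (Fin fdim) (Fin fdim) ℂ))
        ⊗ₖ (1 : Matrix (Fin gdim) (Fin gdim) ℂ))) := by
    rw [E3, E3r, Matrix.one_kronecker_one]
    exact aux_ptrace_swap _ ρ
  constructor
  · calc (A i ⊗ₖ (1 : Matrix (Fin fdim) (Fin fdim) ℂ)) * ptrace3 ρ
        = ptrace3 (((A i ⊗ₖ (1 : Matrix (Fin fdim) (Fin fdim) ℂ))
            ⊗ₖ (1 : Matrix (Fin gdim) (Fin gdim) ℂ)) * ρ) := (aux_ptrace_left _ ρ).symm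
      _ = ptrace3 (ρ * ((A i ⊗ₖ (1 : Matrix (Fin fdim) (Fin fdim) ℂ))
            ⊗ₖ (1 : Matrix (Fin gdim) (Fin gdim) ℂ))) := key
      _ = ptrace3 ρ * (A i ⊗ₖ (1 : Matrix (Fin fdim) (Fin fdim) ℂ)) :=
        aux_ptrace_right _ ρ
  · calc ((1 : Matrix (Fin s) (Fin s) ℂ) ⊗ₖ X i) * ptrace3 ρ
        = ptrace3 ((((1 : Matrix (Fin s) (Fin s) ℂ) ⊗ₖ X i)
            ⊗ₖ (1 : Matrix (Fin gdim) (Fin gdim) ℂ)) * ρ) := (aux_ptrace_left _ ρ).symm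
      _ = ptrace3 (((A i ⊗ₖ (1 : Matrix (Fin fdim) (Fin fdim) ℂ))
            ⊗ₖ (1 : Matrix (Fin gdim) (Fin gdim) ℂ)) * ρ) := by rw [E2, ← E1]
      _ = ptrace3 (ρ * ((A i ⊗ₖ (1 : Matrix (Fin fdim) (Fin fdim) ℂ))
            ⊗ₖ (1 : Matrix (Fin gdim) (Fin gdim) ℂ))) := key
      _ = ptrace3 (ρ * (((1 : Matrix (Fin s) (Fin s) ℂ) ⊗ₖ X i)
            ⊗ₖ (1 : Matrix (Fin gdim) (Fin gdim) ℂ))) := by rw [E1r, ← E2r]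
      _ = ptrace3 ρ * ((1 : Matrix (Fin s) (Fin s) ℂ) ⊗ₖ X i) :=
        aux_ptrace_right _ ρ
end
end

section
/- Let ρ be a density matrix on ℂ^s ⊗ ℂ^f. Let (A_i)_{i∈I} and (B_j)_{j∈J} be projective measurements on ℂ^s that commute with each other (A_i B_j = B_j A_i for all i, j), and let (X_i)_{i∈I} and (Y_j)_{j∈J} be projective measurements on ℂ^f with Re Tr((A_i ⊗ X_{i'}) ρ) = 0 whenever i ≠ i' and Re Tr((B_j ⊗ Y_{j'}) ρ) = 0 whenever j ≠ j'. Then for all i ∈ I and j ∈ J: (1 ⊗ X_i Y_j) ρ (1 ⊗ Y_j X_i) = (1 ⊗ Y_j X_i) ρ (1 ⊗ X_i Y_j), and both sides equal (A_i B_j ⊗ 1) ρ (B_j A_i ⊗ 1); that is, the environmental records X and Y of two commuting system observables commute on the support of ρ. -/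
open Matrix Kronecker BigOperators ComplexOrder

noncomputable section

lemma kron_conjT {n m : Type*} [Fintype n] [Fintype m]
    (A : Matrix n n ℂ) (B : Matrix m m ℂ) : (A ⊗ₖ B)ᴴ = Aᴴ ⊗ₖ Bᴴ := by
  ext ⟨i, k⟩ ⟨j, l⟩
  simp [Matrix.conjTranspose_apply, mul_comm]

lemma sum_kron {ι n m : Type*} [Fintype ι] [Fintype n] [Fintype m]
    (A : ι → Matrix n n ℂ) (B : Matrix m m ℂ) :
    (∑ i, A i) ⊗ₖ B = ∑ i, A i ⊗ₖ B := by
  ext ⟨i, k⟩ ⟨j, l⟩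
  simp [Matrix.sum_apply, Finset.sum_mul]

lemma kron_sum {ι n m : Type*} [Fintype ι] [Fintype n] [Fintype m]
    (A : Matrix n n ℂ) (B : ι → Matrix m m ℂ) :
    A ⊗ₖ (∑ i, B i) = ∑ i, A ⊗ₖ B i := by
  ext ⟨i, k⟩ ⟨j, l⟩
  simp [Matrix.sum_apply, Finset.mul_sum]

lemma trace_re_zero_of_conjT {n m : Type*} [Fintype n] [Fintype m]
    {M : Matrix n m ℂ} (h : ((Mᴴ * M).trace).re = 0) : M = 0 := by
  have ht : (Mᴴ * M).trace = (((∑ j, ∑ i, Complex.normSq (M i j)) : ℝ) : ℂ) := by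
    simp only [Matrix.trace, Matrix.diag, Matrix.mul_apply, Matrix.conjTranspose_apply]
    push_cast
    congr 1; funext j; congr 1; funext i
    rw [mul_comm]; exact Complex.mul_conj _
  rw [ht, Complex.ofReal_re] at h
  have h1 : ∀ j ∈ Finset.univ, (∑ i, Complex.normSq (M i j)) = 0 := by
    rw [← Finset.sum_eq_zero_iff_of_nonneg (fun j _ => Finset.sum_nonneg
      (fun i _ => Complex.normSq_nonneg _))]
    exact h
  ext i j
  have h2 := (Finset.sum_eq_zero_iff_of_nonneg
    (fun i (_ : i ∈ Finset.univ) => Complex.normSq_nonneg (M i j))).mp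
    (h1 j (Finset.mem_univ j)) i (Finset.mem_univ i)
  simpa using Complex.normSq_eq_zero.mp h2

open scoped MatrixOrder in
lemma proj_mul_rho_zero {n : Type*} [Fintype n] [DecidableEq n]
    {ρ P : Matrix n n ℂ} (hρ : ρ.PosSemidef) (hP : P.IsHermitian)
    (hPP : P * P = P) (h : ((P * ρ).trace).re = 0) : P * ρ = 0 := by
  set C := CFC.sqrt ρ with hCdef
  have hC : C * C = ρ := CFC.sqrt_mul_sqrt_self ρ hρ.nonneg
  have hCh : Cᴴ = C := (CFC.sqrt_nonneg ρ).posSemidef.1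
  have hMC : (P * C)ᴴ * (P * C) = C * P * C := by
    rw [Matrix.conjTranspose_mul, hCh, hP, mul_assoc, ← mul_assoc P P C, hPP, ← mul_assoc]
  have htr : (((P * C)ᴴ * (P * C)).trace).re = 0 := by
    rw [hMC, Matrix.trace_mul_cycle, hC, Matrix.trace_mul_comm]
    exact h
  have hM0 : P * C = 0 := trace_re_zero_of_conjT htr
  calc P * ρ = P * C * C := by rw [← hC, mul_assoc]
    _ = 0 := by rw [hM0, Matrix.zero_mul]

/-- Record lemma: a perfect record on the fragment acts like the system observable. -/
lemma record_eq {s fdim : ℕ} {I : Type*} [Fintype I] [DecidableEq I]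
    (ρ : Matrix (Fin s × Fin fdim) (Fin s × Fin fdim) ℂ) (hρ : ρ.PosSemidef)
    (A : I → Matrix (Fin s) (Fin s) ℂ) (hA : IsProjMeasurement A)
    (X : I → Matrix (Fin fdim) (Fin fdim) ℂ) (hX : IsProjMeasurement X)
    (hAX : ∀ i i', i ≠ i' → (((A i ⊗ₖ X i') * ρ).trace).re = 0) (i : I) :
    ((1 : Matrix (Fin s) (Fin s) ℂ) ⊗ₖ X i) * ρ
      = (A i ⊗ₖ (1 : Matrix (Fin fdim) (Fin fdim) ℂ)) * ρ := by
  obtain ⟨hAh, hAo, hAs⟩ := hA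
  obtain ⟨hXh, hXo, hXs⟩ := hX
  have hzero : ∀ a b : I, a ≠ b → (A a ⊗ₖ X b) * ρ = 0 := by
    intro a b hab
    refine proj_mul_rho_zero hρ ?_ ?_ (hAX a b hab)
    · show _ᴴ = _
      rw [kron_conjT, hAh a, hXh b]
    · rw [← Matrix.mul_kronecker_mul, hAo, hXo, if_pos rfl, if_pos rfl]
  have e1 : ((1 : Matrix (Fin s) (Fin s) ℂ) ⊗ₖ X i) * ρ = (A i ⊗ₖ X i) * ρ := by
    rw [← hAs, sum_kron, Finset.sum_mul]
    exact Finset.sum_eq_single i (fun b _ hb => hzero b i hb) (by simp)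
  have e2 : (A i ⊗ₖ (1 : Matrix (Fin fdim) (Fin fdim) ℂ)) * ρ = (A i ⊗ₖ X i) * ρ := by
    rw [← hXs, kron_sum, Finset.sum_mul]
    exact Finset.sum_eq_single i (fun b _ hb => hzero i b (Ne.symm hb)) (by simp)
  rw [e1, e2]

/-- Lemma 4: the environmental records `X` and `Y` of two commuting system observables
`A` and `B` commute on the support of `ρ`, and the products equal the effect of the
direct measurements `Aᵢ Bⱼ`. -/
theorem stmt_5 {s fdim : ℕ} {I J : Type*}
    [Fintype I] [DecidableEq I] [Fintype J] [DecidableEq J]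
    (ρ : Matrix (Fin s × Fin fdim) (Fin s × Fin fdim) ℂ) (hρ : IsDensityMatrix ρ)
    (A : I → Matrix (Fin s) (Fin s) ℂ) (hA : IsProjMeasurement A)
    (B : J → Matrix (Fin s) (Fin s) ℂ) (hB : IsProjMeasurement B)
    (hAB : ∀ i j, A i * B j = B j * A i)
    (X : I → Matrix (Fin fdim) (Fin fdim) ℂ) (hX : IsProjMeasurement X)
    (Y : J → Matrix (Fin fdim) (Fin fdim) ℂ) (hY : IsProjMeasurement Y)
    (hAX : ∀ i i', i ≠ i' → (((A i ⊗ₖ X i') * ρ).trace).re = 0)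
    (hBY : ∀ j j', j ≠ j' → (((B j ⊗ₖ Y j') * ρ).trace).re = 0) :
    ∀ (i : I) (j : J),
      ((1 : Matrix (Fin s) (Fin s) ℂ) ⊗ₖ (X i * Y j)) * ρ *
          ((1 : Matrix (Fin s) (Fin s) ℂ) ⊗ₖ (Y j * X i))
        = ((1 : Matrix (Fin s) (Fin s) ℂ) ⊗ₖ (Y j * X i)) * ρ *
          ((1 : Matrix (Fin s) (Fin s) ℂ) ⊗ₖ (X i * Y j)) ∧
      ((1 : Matrix (Fin s) (Fin s) ℂ) ⊗ₖ (X i * Y j)) * ρ *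
          ((1 : Matrix (Fin s) (Fin s) ℂ) ⊗ₖ (Y j * X i))
        = ((A i * B j) ⊗ₖ (1 : Matrix (Fin fdim) (Fin fdim) ℂ)) * ρ *
          ((B j * A i) ⊗ₖ (1 : Matrix (Fin fdim) (Fin fdim) ℂ)) := by
  intro i j
  have hρps := hρ.1
  have hρh : ρᴴ = ρ := hρps.1
  have rx : ∀ i, ((1 : Matrix (Fin s) (Fin s) ℂ) ⊗ₖ X i) * ρ
      = (A i ⊗ₖ (1 : Matrix (Fin fdim) (Fin fdim) ℂ)) * ρ :=
    record_eq ρ hρps A hA X hX hAX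
  have ry : ∀ j, ((1 : Matrix (Fin s) (Fin s) ℂ) ⊗ₖ Y j) * ρ
      = (B j ⊗ₖ (1 : Matrix (Fin fdim) (Fin fdim) ℂ)) * ρ :=
    record_eq ρ hρps B hB Y hY hBY
  -- left-multiplication identities for the products
  have L1 : ((1 : Matrix (Fin s) (Fin s) ℂ) ⊗ₖ (X i * Y j)) * ρ
      = ((A i * B j) ⊗ₖ (1 : Matrix (Fin fdim) (Fin fdim) ℂ)) * ρ := by
    calc ((1 : Matrix (Fin s) (Fin s) ℂ) ⊗ₖ (X i * Y j)) * ρ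
        = ((1 : Matrix (Fin s) (Fin s) ℂ) ⊗ₖ X i) *
            (((1 : Matrix (Fin s) (Fin s) ℂ) ⊗ₖ Y j) * ρ) := by
          rw [← mul_assoc, ← Matrix.mul_kronecker_mul, one_mul]
      _ = ((1 : Matrix (Fin s) (Fin s) ℂ) ⊗ₖ X i) *
            ((B j ⊗ₖ (1 : Matrix (Fin fdim) (Fin fdim) ℂ)) * ρ) := by rw [ry j]
      _ = (B j ⊗ₖ (1 : Matrix (Fin fdim) (Fin fdim) ℂ)) *
            (((1 : Matrix (Fin s) (Fin s) ℂ) ⊗ₖ X i) * ρ) := by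
          rw [← mul_assoc, ← mul_assoc, ← Matrix.mul_kronecker_mul,
            ← Matrix.mul_kronecker_mul, one_mul, mul_one, one_mul, mul_one]
      _ = (B j ⊗ₖ (1 : Matrix (Fin fdim) (Fin fdim) ℂ)) *
            ((A i ⊗ₖ (1 : Matrix (Fin fdim) (Fin fdim) ℂ)) * ρ) := by rw [rx i]
      _ = ((A i * B j) ⊗ₖ (1 : Matrix (Fin fdim) (Fin fdim) ℂ)) * ρ := by
          rw [← mul_assoc, ← Matrix.mul_kronecker_mul, one_mul, ← hAB]
  have L2 : ((1 : Matrix (Fin s) (Fin s) ℂ) ⊗ₖ (Y j * X i)) * ρ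
      = ((A i * B j) ⊗ₖ (1 : Matrix (Fin fdim) (Fin fdim) ℂ)) * ρ := by
    calc ((1 : Matrix (Fin s) (Fin s) ℂ) ⊗ₖ (Y j * X i)) * ρ
        = ((1 : Matrix (Fin s) (Fin s) ℂ) ⊗ₖ Y j) *
            (((1 : Matrix (Fin s) (Fin s) ℂ) ⊗ₖ X i) * ρ) := by
          rw [← mul_assoc, ← Matrix.mul_kronecker_mul, one_mul]
      _ = ((1 : Matrix (Fin s) (Fin s) ℂ) ⊗ₖ Y j) *
            ((A i ⊗ₖ (1 : Matrix (Fin fdim) (Fin fdim) ℂ)) * ρ) := by rw [rx i]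
      _ = (A i ⊗ₖ (1 : Matrix (Fin fdim) (Fin fdim) ℂ)) *
            (((1 : Matrix (Fin s) (Fin s) ℂ) ⊗ₖ Y j) * ρ) := by
          rw [← mul_assoc, ← mul_assoc, ← Matrix.mul_kronecker_mul,
            ← Matrix.mul_kronecker_mul, one_mul, mul_one, one_mul, mul_one]
      _ = (A i ⊗ₖ (1 : Matrix (Fin fdim) (Fin fdim) ℂ)) *
            ((B j ⊗ₖ (1 : Matrix (Fin fdim) (Fin fdim) ℂ)) * ρ) := by rw [ry j]
      _ = ((A i * B j) ⊗ₖ (1 : Matrix (Fin fdim) (Fin fdim) ℂ)) * ρ := by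
          rw [← mul_assoc, ← Matrix.mul_kronecker_mul, one_mul]
  -- right-multiplication identities via conjugate transpose
  have hXh := hX.1
  have hYh := hY.1
  have hAh := hA.1
  have hBh := hB.1
  have R1 : ρ * ((1 : Matrix (Fin s) (Fin s) ℂ) ⊗ₖ (Y j * X i))
      = ρ * ((B j * A i) ⊗ₖ (1 : Matrix (Fin fdim) (Fin fdim) ℂ)) := by
    have := congrArg Matrix.conjTranspose L1
    rwa [Matrix.conjTranspose_mul, Matrix.conjTranspose_mul, hρh, kron_conjT, kron_conjT,
      Matrix.conjTranspose_one, Matrix.conjTranspose_one, Matrix.conjTranspose_mul,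
      Matrix.conjTranspose_mul, hXh i, hYh j, hAh i, hBh j] at this
  have R2 : ρ * ((1 : Matrix (Fin s) (Fin s) ℂ) ⊗ₖ (X i * Y j))
      = ρ * ((B j * A i) ⊗ₖ (1 : Matrix (Fin fdim) (Fin fdim) ℂ)) := by
    have := congrArg Matrix.conjTranspose L2
    rwa [Matrix.conjTranspose_mul, Matrix.conjTranspose_mul, hρh, kron_conjT, kron_conjT,
      Matrix.conjTranspose_one, Matrix.conjTranspose_one, Matrix.conjTranspose_mul,
      Matrix.conjTranspose_mul, hXh i, hYh j, hAh i, hBh j] at this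
  have key1 : ((1 : Matrix (Fin s) (Fin s) ℂ) ⊗ₖ (X i * Y j)) * ρ *
      ((1 : Matrix (Fin s) (Fin s) ℂ) ⊗ₖ (Y j * X i))
      = ((A i * B j) ⊗ₖ (1 : Matrix (Fin fdim) (Fin fdim) ℂ)) * ρ *
        ((B j * A i) ⊗ₖ (1 : Matrix (Fin fdim) (Fin fdim) ℂ)) := by
    rw [L1, mul_assoc, R1, ← mul_assoc]
  have key2 : ((1 : Matrix (Fin s) (Fin s) ℂ) ⊗ₖ (Y j * X i)) * ρ *
      ((1 : Matrix (Fin s) (Fin s) ℂ) ⊗ₖ (X i * Y j))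
      = ((A i * B j) ⊗ₖ (1 : Matrix (Fin fdim) (Fin fdim) ℂ)) * ρ *
        ((B j * A i) ⊗ₖ (1 : Matrix (Fin fdim) (Fin fdim) ℂ)) := by
    rw [L2, mul_assoc, R2, ← mul_assoc]
  exact ⟨key1.trans key2.symm, key1⟩
end
end

section
/- Let p be a probability vector on {1,…,d}, let Ψ_1,…,Ψ_d be orthonormal vectors in ℂ^m, and let σ = ∑_{i=1}^d p_i · E_ii ⊗ |Ψ_i⟩⟨Ψ_i| be the corresponding density matrix on ℂ^d ⊗ ℂ^m. Let (B_l)_{l∈L} be any projective measurement on ℂ^d and (Y_n)_{n∈N} any projective measurement on ℂ^m. Define the joint distributions p_{AY}(i,n) = Re Tr((E_ii ⊗ Y_n) σ) and p_{BY}(l,n) = Re Tr((B_l ⊗ Y_n) σ). Then I(A:Y) ≥ I(B:Y): any measurement Y on the fragment of the environment reveals at least as much information about the pointer observable A (with spectral projectors E_ii) as about any other system observable B. -/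
open Matrix Kronecker BigOperators

noncomputable section

/-- Standard Hermitian inner product on `Fin m → ℂ` (conjugate-linear in the first slot). -/
def cinner {m : ℕ} (u v : Fin m → ℂ) : ℂ :=
  ∑ k, (starRingEnd ℂ) (u k) * v k

/-- The matrix unit `E_ii`. -/
def matE {d : ℕ} (i : Fin d) : Matrix (Fin d) (Fin d) ℂ :=
  Matrix.single i i 1

/-- The rank-one projector `|v⟩⟨v|`. -/
def projVec {m : ℕ} (v : Fin m → ℂ) : Matrix (Fin m) (Fin m) ℂ :=
  Matrix.of fun k l => v k * (starRingEnd ℂ) (v l)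

/-- The perfectly correlated system–fragment state `σ = ∑ᵢ pᵢ E_ii ⊗ |Ψᵢ⟩⟨Ψᵢ|`. -/
def sigmaSF {d m : ℕ} (p : Fin d → ℝ) (Ψ : Fin d → Fin m → ℂ) :
    Matrix (Fin d × Fin m) (Fin d × Fin m) ℂ :=
  ∑ i, (p i : ℂ) • (matE i ⊗ₖ projVec (Ψ i))

/-- Mutual information of a joint pmf `p` on `I × J`. -/
def mutualInfo {I J : Type*} [Fintype I] [Fintype J] (p : I → J → ℝ) : ℝ :=
  ∑ i, ∑ j, if p i j = 0 then 0
    else p i j * Real.log (p i j / ((∑ j', p i j') * (∑ i', p i' j)))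

/-!
On `σ` the system factor is diagonal in the pointer basis, so measuring `B` on `σ` is the same
as measuring `A` and then relabelling the outcome `i` as `l` with probability `(B_l)ᵢᵢ`:
`p_BY(l, n) = ∑ᵢ (B_l)ᵢᵢ p_AY(i, n)`. The diagonal entries of a projective measurement form a
column-stochastic matrix (they are diagonal entries of positive semidefinite matrices and sum
to `1`), so the claim is the data-processing inequality for mutual information. That in turn
follows termwise from the log-sum inequality, which is Jensen's inequality for `x ↦ x log x`.
-/

open Finset Real
open scoped ComplexOrder

lemma div_mul_div_cancel_of_imp {a b c : ℝ} (hab : b = 0 → a = 0) :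
    b / c * (a / b) = a / c := by
  rcases eq_or_ne b 0 with hb | hb
  · simp [hb, hab hb]
  · field_simp

theorem sum_mul_log_div_sum_le {ι : Type*} (s : Finset ι) (a b : ι → ℝ)
    (ha : ∀ i ∈ s, 0 ≤ a i) (hb : ∀ i ∈ s, 0 ≤ b i) (hab : ∀ i ∈ s, b i = 0 → a i = 0) :
    (∑ i ∈ s, a i) * log ((∑ i ∈ s, a i) / ∑ i ∈ s, b i) ≤
      ∑ i ∈ s, a i * log (a i / b i) := by
  set A := ∑ i ∈ s, a i
  set B := ∑ i ∈ s, b i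
  obtain hB | hB := (show 0 ≤ B from sum_nonneg hb).eq_or_lt
  · have ha0 : ∀ i ∈ s, a i = 0 := fun i hi =>
      hab i hi ((sum_eq_zero_iff_of_nonneg hb).mp hB.symm i hi)
    rw [show A = 0 from sum_eq_zero ha0, zero_mul]
    exact (sum_eq_zero fun i hi => by rw [ha0 i hi, zero_mul]).ge
  have jensen := convexOn_mul_log.map_sum_le (t := s) (w := fun i => b i / B)
    (p := fun i => a i / b i) (fun i hi => div_nonneg (hb i hi) hB.le)
    (by rw [← sum_div, div_self hB.ne'])
    (fun i hi => Set.mem_Ici.mpr (div_nonneg (ha i hi) (hb i hi)))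
  have hmean : ∑ i ∈ s, b i / B * (a i / b i) = A / B := by
    rw [sum_div]
    exact sum_congr rfl fun i hi => div_mul_div_cancel_of_imp (hab i hi)
  have hmeanf : ∑ i ∈ s, b i / B * (a i / b i * log (a i / b i)) =
      (∑ i ∈ s, a i * log (a i / b i)) / B := by
    rw [sum_div]
    refine sum_congr rfl fun i hi => ?_
    rw [← mul_assoc, div_mul_div_cancel_of_imp (hab i hi), div_mul_eq_mul_div]
  simp only [smul_eq_mul, hmean, hmeanf] at jensen
  calc A * log (A / B) = B * (A / B * log (A / B)) := by field_simp
    _ ≤ B * ((∑ i ∈ s, a i * log (a i / b i)) / B) := by gcongr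
    _ = _ := mul_div_cancel₀ _ hB.ne'

lemma mul_log_div_mul_left (t a b : ℝ) :
    t * a * log (t * a / (t * b)) = t * (a * log (a / b)) := by
  rcases eq_or_ne t 0 with rfl | ht
  · simp
  · rw [mul_div_mul_left a b ht, mul_assoc]

lemma mutualInfo_eq_sum {I J : Type*} [Fintype I] [Fintype J] (p : I → J → ℝ) :
    mutualInfo p = ∑ i, ∑ j, p i j * log (p i j / ((∑ j', p i j') * ∑ i', p i' j)) := by
  unfold mutualInfo
  congr! 2 with i _ j _
  split_ifs with h
  · rw [h, zero_mul]
  · rfl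

theorem mutualInfo_le_of_stochastic {I L N : Type*} [Fintype I] [Fintype L] [Fintype N]
    (p : I → N → ℝ) (T : L → I → ℝ) (q : L → N → ℝ)
    (hp : ∀ i n, 0 ≤ p i n) (hT : ∀ l i, 0 ≤ T l i) (hT1 : ∀ i, ∑ l, T l i = 1)
    (hq : ∀ l n, q l n = ∑ i, T l i * p i n) :
    mutualInfo q ≤ mutualInfo p := by
  set F : I → N → ℝ := fun i n => p i n * log (p i n / ((∑ n', p i n') * ∑ i', p i' n))
  have hcol : ∀ n, ∑ l, q l n = ∑ i, p i n := fun n => by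
    simp only [hq]
    rw [sum_comm]
    simp only [← sum_mul, hT1, one_mul]
  have hrow : ∀ l, ∑ n, q l n = ∑ i, T l i * ∑ n, p i n := fun l => by
    simp only [hq, mul_sum]
    exact sum_comm
  have hmarg : ∀ i n, (∑ n', p i n') * (∑ i', p i' n) = 0 → p i n = 0 := fun i n h => by
    rcases mul_eq_zero.mp h with h | h
    · exact (sum_eq_zero_iff_of_nonneg fun n' _ => hp i n').mp h n (mem_univ n)
    · exact (sum_eq_zero_iff_of_nonneg fun i' _ => hp i' n).mp h i (mem_univ i)
  have hterm : ∀ l n, q l n * log (q l n / ((∑ n', q l n') * ∑ l', q l' n)) ≤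
      ∑ i, T l i * F i n := fun l n => by
    have hden : (∑ n', q l n') * (∑ l', q l' n) =
        ∑ i, T l i * ((∑ n', p i n') * ∑ i', p i' n) := by
      rw [hrow, hcol, sum_mul]
      exact sum_congr rfl fun i _ => mul_assoc _ _ _
    rw [hq, hden]
    simp only [F, ← mul_log_div_mul_left]
    refine sum_mul_log_div_sum_le _ _ _ (fun i _ => mul_nonneg (hT l i) (hp i n))
      (fun i _ => mul_nonneg (hT l i) (mul_nonneg (sum_nonneg fun n' _ => hp i n')
        (sum_nonneg fun i' _ => hp i' n))) fun i _ h => ?_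
    rcases mul_eq_zero.mp h with h | h
    · rw [h, zero_mul]
    · rw [hmarg i n h, mul_zero]
  calc mutualInfo q ≤ ∑ l, ∑ n, ∑ i, T l i * F i n := by
        rw [mutualInfo_eq_sum]
        exact sum_le_sum fun l _ => sum_le_sum fun n _ => hterm l n
    _ = ∑ i, ∑ n, (∑ l, T l i) * F i n := by
        simp only [sum_mul]
        rw [sum_comm_cycle]
        exact sum_congr rfl fun i _ => sum_comm
    _ = mutualInfo p := by simp only [hT1, one_mul, mutualInfo_eq_sum, F]

lemma posSemidef_of_isHermitian_of_mul_self {R n : Type*} [Ring R] [PartialOrder R]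
    [StarRing R] [StarOrderedRing R] [Fintype n] {P : Matrix n n R}
    (hH : P.IsHermitian) (hP : P * P = P) : P.PosSemidef := by
  rw [show P = Pᴴ * P by rw [hH.eq, hP]]
  exact posSemidef_conjTranspose_mul_self P

lemma IsProjMeasurement.posSemidef {ι n : Type*} [Fintype ι] [DecidableEq ι] [Fintype n]
    [DecidableEq n] {P : ι → Matrix n n ℂ} (hP : IsProjMeasurement P) (k : ι) :
    (P k).PosSemidef :=
  posSemidef_of_isHermitian_of_mul_self (hP.1 k) (by simpa using hP.2.1 k k)

lemma IsProjMeasurement.sum_diag_re {ι n : Type*} [Fintype ι] [DecidableEq ι] [Fintype n]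
    [DecidableEq n] {P : ι → Matrix n n ℂ} (hP : IsProjMeasurement P) (i : n) :
    ∑ k, (P k i i).re = 1 := by
  rw [← Complex.re_sum, ← Matrix.sum_apply, hP.2.2, one_apply_eq, Complex.one_re]

lemma trace_mul_projVec {m : ℕ} (Y : Matrix (Fin m) (Fin m) ℂ) (v : Fin m → ℂ) :
    (Y * projVec v).trace = star v ⬝ᵥ (Y *ᵥ v) := by
  rw [show projVec v = vecMulVec v (star v) from rfl, mul_vecMulVec, trace_vecMulVec,
    dotProduct_comm]

lemma Matrix.PosSemidef.trace_mul_projVec_nonneg {m : ℕ} {Y : Matrix (Fin m) (Fin m) ℂ}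
    (hY : Y.PosSemidef) (v : Fin m → ℂ) : 0 ≤ (Y * projVec v).trace := by
  rw [trace_mul_projVec]
  exact hY.dotProduct_mulVec_nonneg v

lemma trace_kronecker_mul_sigmaSF {d m : ℕ} (p : Fin d → ℝ) (Ψ : Fin d → Fin m → ℂ)
    (M : Matrix (Fin d) (Fin d) ℂ) (Y : Matrix (Fin m) (Fin m) ℂ) :
    ((M ⊗ₖ Y) * sigmaSF p Ψ).trace = ∑ i, M i i * ((p i : ℂ) * (Y * projVec (Ψ i)).trace) := by
  simp only [sigmaSF, mul_sum, trace_sum]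
  refine sum_congr rfl fun i _ => ?_
  rw [Matrix.mul_smul, trace_smul, ← mul_kronecker_mul, trace_kronecker, matE, trace_mul_single,
    MulOpposite.op_one, one_smul, smul_eq_mul]
  ring

lemma re_trace_kronecker_mul_sigmaSF {d m : ℕ} (p : Fin d → ℝ) (Ψ : Fin d → Fin m → ℂ)
    (M : Matrix (Fin d) (Fin d) ℂ) (hM : ∀ i, (M i i).im = 0) (Y : Matrix (Fin m) (Fin m) ℂ) :
    (((M ⊗ₖ Y) * sigmaSF p Ψ).trace).re =
      ∑ i, (M i i).re * (p i * (Y * projVec (Ψ i)).trace.re) := by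
  simp [trace_kronecker_mul_sigmaSF, Complex.re_sum, Complex.mul_re, hM]

theorem stmt_16_general {d m : ℕ} {L N : Type*}
    [Fintype L] [DecidableEq L] [Fintype N] [DecidableEq N]
    (p : Fin d → ℝ) (hp0 : ∀ i, 0 ≤ p i)
    (Ψ : Fin d → Fin m → ℂ)
    (B : L → Matrix (Fin d) (Fin d) ℂ) (hB : IsProjMeasurement B)
    (Y : N → Matrix (Fin m) (Fin m) ℂ) (hY : IsProjMeasurement Y)
    (pAY : Fin d → N → ℝ)
    (hAY : ∀ i n, pAY i n = (((matE i ⊗ₖ Y n) * sigmaSF p Ψ).trace).re)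
    (pBY : L → N → ℝ)
    (hBY : ∀ l n, pBY l n = (((B l ⊗ₖ Y n) * sigmaSF p Ψ).trace).re) :
    mutualInfo pBY ≤ mutualInfo pAY := by
  have hdiag : ∀ l i, 0 ≤ B l i i := fun l i => (hB.posSemidef l).diag_nonneg
  have hpAY : ∀ i n, pAY i n = p i * ((Y n * projVec (Ψ i)).trace).re := fun i n => by
    rw [hAY, re_trace_kronecker_mul_sigmaSF _ _ _
      fun j => by simp [matE, single_apply, apply_ite Complex.im]]
    simp [matE, single_apply, apply_ite Complex.re]
  refine mutualInfo_le_of_stochastic pAY (fun l i => (B l i i).re) pBY (fun i n => ?_)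
    (fun l i => (Complex.nonneg_iff.mp (hdiag l i)).1) hB.sum_diag_re (fun l n => ?_)
  · rw [hpAY]
    exact mul_nonneg (hp0 i)
      (Complex.nonneg_iff.mp ((hY.posSemidef n).trace_mul_projVec_nonneg _)).1
  · rw [hBY, re_trace_kronecker_mul_sigmaSF _ _ _
      fun i => (Complex.nonneg_iff.mp (hdiag l i)).2.symm]
    simp only [hpAY]

/-- Eq. (35) (observable optimality): any fragment measurement `Y` reveals at least as
much information about the pointer observable `A` (projectors `E_ii`) as about any other
system observable `B`: `I(B:Y) ≤ I(A:Y)`. -/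
theorem stmt_16 {d m : ℕ} {L N : Type*}
    [Fintype L] [DecidableEq L] [Fintype N] [DecidableEq N]
    (p : Fin d → ℝ) (hp0 : ∀ i, 0 ≤ p i) (hp1 : ∑ i, p i = 1)
    (Ψ : Fin d → Fin m → ℂ)
    (hΨ : ∀ i j, cinner (Ψ i) (Ψ j) = if i = j then 1 else 0)
    (B : L → Matrix (Fin d) (Fin d) ℂ) (hB : IsProjMeasurement B)
    (Y : N → Matrix (Fin m) (Fin m) ℂ) (hY : IsProjMeasurement Y)
    (pAY : Fin d → N → ℝ)
    (hAY : ∀ i n, pAY i n = (((matE i ⊗ₖ Y n) * sigmaSF p Ψ).trace).re)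
    (pBY : L → N → ℝ)
    (hBY : ∀ l n, pBY l n = (((B l ⊗ₖ Y n) * sigmaSF p Ψ).trace).re) :
    mutualInfo pBY ≤ mutualInfo pAY :=
  stmt_16_general p hp0 Ψ B hB Y hY pAY hAY pBY hBY
end
end
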